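/- The group S_h × {id} × Ω is regular if and only if h is odd. -/

import Mathlib

/-- A preference profile: each individual `i : Fin h` has a linear order on the `n`
alternatives, identified with the permutation of `Fin n` mapping ranks to alternatives. -/
abbrev Profile (h n : Nat) := Fin h → Equiv.Perm (Fin n)

/-- The order-reversing permutation `ρ₀`. -/
def rho0 (n : Nat) : Equiv.Perm (Fin n) := Fin.revPerm

/-- The subgroup `Ω = {id, ρ₀}` of `S_n` (generated by `ρ₀`, which has order 2). -/
def Omega (n : Nat) : Subgroup (Equiv.Perm (Fin n)) := Subgroup.zpowers (rho0 n)

/-- `ρ₀` as an element of `Ω`. -/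
def omegaRho0 (n : Nat) : Omega n := ⟨rho0 n, Subgroup.mem_zpowers _⟩

/-- The group `G = S_h × S_n × Ω`. -/
abbrev GG (h n : Nat) := Equiv.Perm (Fin h) × Equiv.Perm (Fin n) × (Omega n)

/-- The action of `(φ, ψ, ρ) ∈ G` on a profile: `(p^{(φ,ψ,ρ)})_i = ψ p_{φ⁻¹(i)} ρ`. -/
def act {h n : Nat} (g : GG h n) (p : Profile h n) : Profile h n :=
  fun i => g.2.1 * p (g.1⁻¹ i) * (g.2.2 : Equiv.Perm (Fin n))

/-- A rule `F` is `U`-symmetric if `F(p^{(φ,ψ,ρ)}) = ψ F(p) ρ` for all `p` and `(φ,ψ,ρ) ∈ U`. -/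
def USymm {h n : Nat} (U : Set (GG h n)) (F : Profile h n → Equiv.Perm (Fin n)) : Prop :=
  ∀ p : Profile h n, ∀ g ∈ U, F (act g p) = g.2.1 * F p * (g.2.2 : Equiv.Perm (Fin n))

/-- `S₁^U(p) = { q : ψ q ρ = q for all (φ,ψ,ρ) in the stabilizer of p in U }`. -/
def S1set {h n : Nat} (U : Set (GG h n)) (p : Profile h n) : Set (Equiv.Perm (Fin n)) :=
  {q | ∀ g ∈ U, act g p = p → g.2.1 * q * (g.2.2 : Equiv.Perm (Fin n)) = q}

/-- Regularity of `U`: for every profile `p` there is `ψ*` conjugate to `ρ₀` with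
`Stab_U(p) ⊆ (S_h × {id} × {id}) ∪ (S_h × {ψ*} × {ρ₀})`. -/
def Regular {h n : Nat} (U : Set (GG h n)) : Prop :=
  ∀ p : Profile h n, ∃ ψs : Equiv.Perm (Fin n), IsConj (rho0 n) ψs ∧
    ∀ g ∈ U, act g p = p →
      (g.2.1 = 1 ∧ (g.2.2 : Equiv.Perm (Fin n)) = 1) ∨
      (g.2.1 = ψs ∧ (g.2.2 : Equiv.Perm (Fin n)) = rho0 n)

/-- Number of individuals strictly preferring `x` to `y` in profile `p`
(smaller rank = better, since permutations send ranks to alternatives). -/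
def prefCount {h n : Nat} (p : Profile h n) (x y : Fin n) : Nat :=
  (Finset.univ.filter fun i => (p i)⁻¹ x < (p i)⁻¹ y).card

/-- `C_ν(p)`: linear orders consistent with the `ν`-majority principle applied to `p`. -/
def Cset {h n : Nat} (p : Profile h n) (ν : Nat) : Set (Equiv.Perm (Fin n)) :=
  {q | ∀ x y : Fin n, ν ≤ prefCount p x y → q⁻¹ x < q⁻¹ y}

/-- `ν(p)`: the minimal majority threshold `ν ∈ ℕ ∩ (h/2, h]` with `C_ν(p) ≠ ∅`. -/
noncomputable def nuMin {h n : Nat} (p : Profile h n) : Nat :=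
  sInf {ν : Nat | h < 2 * ν ∧ ν ≤ h ∧ (Cset p ν).Nonempty}

/-- minimal majority rule. -/
def MinMaj {h n : Nat} (F : Profile h n → Equiv.Perm (Fin n)) : Prop :=
  ∀ p : Profile h n, F p ∈ Cset p (nuMin p)

/-- `gcd(T(φ))`: the gcd of the lengths of the orbits (cycles) of `φ`. -/
noncomputable def gcdOrbits {h : Nat} (phi : Equiv.Perm (Fin h)) : Nat :=
  Finset.univ.gcd fun i => Function.minimalPeriod (⇑phi) i

/-!
An element `(φ, 1, ρ₀)` fixes `p` exactly when `p (φ i) = p i * ρ₀` for all `i`. Right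
multiplication by `ρ₀` is a fixed-point-free involution of `S_n`, so after choosing one element
`q` or `q * ρ₀` of each of its orbits, `φ` swaps the voters whose ballot is chosen with the
others, and `h` is even. Conversely, for `h = 2m` the profile giving the first `m` voters `id`
and the last `m` voters `ρ₀` is fixed by `(rev, 1, ρ₀)`; regularity would then force `ρ₀ = 1`
or `ψ* = 1`, and `ψ*` is conjugate to `ρ₀ ≠ 1`.
-/
theorem even_card_of_map_perm_eq_involution {ι β : Type*} [Fintype ι] [LinearOrder β]
    {σ : β → β} (hσ : Function.Involutive σ) (hσ_ne : ∀ x, σ x ≠ x)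
    (f : ι → β) (φ : Equiv.Perm ι) (hf : ∀ i, f (φ i) = σ (f i)) :
    Even (Fintype.card ι) := by
  classical
  have hlt_iff : ∀ x, σ x < σ (σ x) ↔ ¬ x < σ x := fun x => by
    rw [hσ x, not_lt]
    exact ⟨le_of_lt, fun h => lt_of_le_of_ne h (hσ_ne x)⟩
  have hcard : Fintype.card {i // f i < σ (f i)} = Fintype.card {i // ¬ f i < σ (f i)} :=
    Fintype.card_congr <| φ.subtypeEquiv fun i => by rw [hf, hlt_iff, not_not]
  rw [Fintype.card_subtype_compl] at hcard
  have := Fintype.card_subtype_le fun i => f i < σ (f i)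
  exact ⟨Fintype.card {i // f i < σ (f i)}, by omega⟩

lemma rho0_mul_self (n : ℕ) : rho0 n * rho0 n = 1 := by
  ext i
  simp [rho0]

lemma rho0_ne_one {n : ℕ} (hn : 2 ≤ n) : rho0 n ≠ 1 := by
  intro h
  have := congrArg (fun σ : Equiv.Perm (Fin n) => (σ ⟨0, by omega⟩ : ℕ)) h
  simp [rho0] at this
  omega

lemma eq_one_or_eq_rho0_of_mem_Omega {n : ℕ} {x : Equiv.Perm (Fin n)} (hx : x ∈ Omega n) :
    x = 1 ∨ x = rho0 n := by
  obtain ⟨k, rfl⟩ := hx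
  dsimp only
  have hsq : rho0 n ^ (2 : ℤ) = 1 := by rw [zpow_two, rho0_mul_self]
  rw [zpow_eq_zpow_emod k hsq]
  rcases Int.emod_two_eq_zero_or_one k with hk | hk <;> simp [hk]

lemma even_of_act_rho0_eq {h n : ℕ} (hn : 2 ≤ n) {φ : Equiv.Perm (Fin h)}
    {p : Profile h n} (hp : act (φ, 1, omegaRho0 n) p = p) : Even h := by
  let : LinearOrder (Equiv.Perm (Fin n)) :=
    LinearOrder.lift' (Fintype.equivFin _) (Fintype.equivFin _).injective
  have hσ : Function.Involutive (· * rho0 n) := fun q => by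
    simp only [mul_assoc, rho0_mul_self, mul_one]
  have hσ_ne : ∀ q : Equiv.Perm (Fin n), q * rho0 n ≠ q := fun q => by
    rw [Ne, mul_eq_left]
    exact rho0_ne_one hn
  have hf : ∀ i, p (φ i) = p i * rho0 n := fun i => by
    simpa [act, omegaRho0] using (congrFun hp (φ i)).symm
  simpa using even_card_of_map_perm_eq_involution hσ hσ_ne p φ hf

lemma act_revPerm_rho0_halves {m n : ℕ} :
    act (Fin.revPerm, 1, omegaRho0 n)
      (fun i : Fin (m + m) => if (i : ℕ) < m then 1 else rho0 n) =
      fun i : Fin (m + m) => if (i : ℕ) < m then 1 else rho0 n := by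
  funext i
  simp only [act, Equiv.Perm.inv_def, Fin.revPerm_symm, Fin.revPerm_apply, Fin.val_rev, omegaRho0,
    one_mul]
  split_ifs <;> first | omega | simp [rho0_mul_self]

lemma not_regular_of_act_rho0_eq {h n : ℕ} (hn : 2 ≤ n) {φ : Equiv.Perm (Fin h)}
    {p : Profile h n} (hp : act (φ, 1, omegaRho0 n) p = p) :
    ¬ Regular {g : GG h n | g.2.1 = 1} := by
  intro hreg
  obtain ⟨ψs, hconj, hstab⟩ := hreg p
  rcases hstab _ rfl hp with ⟨-, h1⟩ | ⟨hψs, -⟩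
  · exact rho0_ne_one hn h1
  · subst hψs
    exact rho0_ne_one hn (isConj_one_right.mp hconj.symm)

theorem stmt16_general {h n : Nat} (hn : 2 ≤ n) :
    Regular {g : GG h n | g.2.1 = 1} ↔ Odd h := by
  constructor
  · intro hreg
    by_contra hodd
    obtain ⟨m, rfl⟩ := Nat.not_odd_iff_even.mp hodd
    exact not_regular_of_act_rho0_eq hn act_revPerm_rho0_halves hreg
  · intro hodd p
    refine ⟨rho0 n, IsConj.refl _, ?_⟩
    rintro ⟨φ, ψ, ρ, hρ⟩ hψ hp
    obtain rfl : ψ = 1 := hψ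
    rcases eq_one_or_eq_rho0_of_mem_Omega hρ with rfl | rfl
    · exact Or.inl ⟨rfl, rfl⟩
    · exact absurd (even_of_act_rho0_eq hn hp) (Nat.not_even_iff_odd.mpr hodd)

theorem stmt16 {h n : Nat} (hh : 2 ≤ h) (hn : 2 ≤ n) :
    Regular {g : GG h n | g.2.1 = 1} ↔ Odd h :=
  stmt16_general hn
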